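/- Let D ⊂ ℂ^n be a hyperconvex domain and Φ_{𝒫,max}^D a global Zhou weight related to the priori datum 𝒫 = ({z_i}_{i=1}^p, {f_{0,i}}_{i=1}^p, {u_{0,i}}_{i=1}^p) on D. Then for every ψ ∈ PSH⁻(D), the inequality ψ(z) ≤ σ_Z(ψ, Φ_{𝒫,max}^D) · Φ_{𝒫,max}^D(z) holds for all z ∈ D, where σ_Z(ψ, Φ_{𝒫,max}^D) := min_{1≤i≤p} σ_{z_i}(ψ, Φ_{𝒫,max}^D). -/

import Mathlib

open Metric MeasureTheory Filter Topology Set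
open scoped ENNReal Classical

noncomputable section

/-- `ℂⁿ`. -/
abbrev Cn (n : ℕ) : Type := Fin n → ℂ

/-- The exponential function on the extended reals, with values in `ℝ≥0∞`
(`exp (-∞) = 0`, `exp (+∞) = ∞`). -/
noncomputable def expE (x : EReal) : ℝ≥0∞ :=
  if x = ⊤ then ⊤ else if x = ⊥ then 0 else ENNReal.ofReal (Real.exp x.toReal)

/-- The logarithm of a nonnegative real number, with values in `EReal`
(`elog 0 = -∞`). -/
noncomputable def elog (x : ℝ) : EReal := if x ≤ 0 then ⊥ else ((Real.log x : ℝ) : EReal)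

section PSH

variable {F : Type*} [NormedAddCommGroup F] [NormedSpace ℂ F]

/-- On every closed complex disc contained in `D`, `u` lies below every harmonic function
(i.e. every real part of a holomorphic function) dominating it on the boundary circle.
This is the sub-mean-value property of subharmonicity along complex lines. -/
def SubMeanOnLines (u : F → EReal) (D : Set F) : Prop :=
  ∀ a b : F, ∀ r : ℝ, 0 < r →
    (∀ l : ℂ, ‖l‖ ≤ r → a + l • b ∈ D) →
    ∀ h : ℂ → ℂ, DifferentiableOn ℂ h (Metric.closedBall 0 r) →
      (∀ l : ℂ, ‖l‖ = r → u (a + l • b) ≤ ((h l).re : EReal)) →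
      ∀ l : ℂ, ‖l‖ ≤ r → u (a + l • b) ≤ ((h l).re : EReal)

/-- `u : F → [-∞, ∞)` is plurisubharmonic on `D`: upper semicontinuous and subharmonic
along every complex line. -/
def PlurisubharmonicOn (u : F → EReal) (D : Set F) : Prop :=
  UpperSemicontinuousOn u D ∧ (∀ z ∈ D, u z < ⊤) ∧ SubMeanOnLines u D

/-- `u ∈ PSH⁻(D)`: `u` is a nonpositive (negative) plurisubharmonic function on `D`. -/
def NegPSHOn (u : F → EReal) (D : Set F) : Prop :=
  PlurisubharmonicOn u D ∧ ∀ z ∈ D, u z ≤ 0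

/-- `f ≥ g + O(1)` near `z₀`. -/
def GeO1Near (f g : F → EReal) (z₀ : F) : Prop :=
  ∃ r > (0:ℝ), ∃ C : ℝ, ∀ w ∈ Metric.ball z₀ r, g w ≤ f w + (C : EReal)

/-- `f = g + O(1)` near `z₀`. -/
def EqO1Near (f g : F → EReal) (z₀ : F) : Prop :=
  GeO1Near f g z₀ ∧ GeO1Near g f z₀

/-- The relative type `σ_{z₀}(ψ, φ) = sup{c ≥ 0 : ψ ≤ cφ + O(1) near z₀}`. -/
noncomputable def relType (ψ φ : F → EReal) (z₀ : F) : ℝ :=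
  sSup {c : ℝ | 0 ≤ c ∧ ∃ r > (0:ℝ), ∃ C : ℝ,
    ∀ w ∈ Metric.ball z₀ r, ψ w ≤ (c : EReal) * φ w + (C : EReal)}

/-- `σ_{z₀}(ψ, φ) ≥ c`, expressed without reference to a (possibly infinite) supremum:
every `c' ∈ [0, c)` is an admissible constant. -/
def relTypeGE (ψ φ : F → EReal) (z₀ : F) (c : ℝ) : Prop :=
  ∀ c' : ℝ, 0 ≤ c' → c' < c → ∃ r > (0:ℝ), ∃ C : ℝ,
    ∀ w ∈ Metric.ball z₀ r, ψ w ≤ (c' : EReal) * φ w + (C : EReal)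

/-- `(dd^c φ)ⁿ = 0` on the open set `Ω`, encoded through the equivalent maximality
property: any plurisubharmonic `u` on `Ω` with `u ≤ φ` outside a compact subset of `Ω`
satisfies `u ≤ φ` on all of `Ω`. -/
def MongeAmpereVanishesOn (φ : F → EReal) (Ω : Set F) : Prop :=
  ∀ u : F → EReal, PlurisubharmonicOn u Ω →
    ∀ K : Set F, IsCompact K → K ⊆ Ω →
      (∀ z ∈ Ω \ K, u z ≤ φ z) → ∀ z ∈ Ω, u z ≤ φ z

/-- `S` is an analytic subset of `D`: locally the common zero set of finitely many
holomorphic functions. -/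
def IsAnalyticSubset (D S : Set F) : Prop :=
  S ⊆ D ∧ ∀ z ∈ D, ∃ r > (0:ℝ), Metric.ball z r ⊆ D ∧ ∃ m : ℕ, ∃ g : Fin m → F → ℂ,
    (∀ j, DifferentiableOn ℂ (g j) (Metric.ball z r)) ∧
    S ∩ Metric.ball z r = {w ∈ Metric.ball z r | ∀ j, g j w = 0}

end PSH

/-- A hyperconvex domain: an open connected nonempty set admitting a continuous negative
plurisubharmonic exhaustion function. -/
def IsHyperconvex {n : ℕ} (D : Set (Cn n)) : Prop :=
  IsOpen D ∧ D.Nonempty ∧ IsPreconnected D ∧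
  ∃ ρ : Cn n → ℝ, ContinuousOn ρ D ∧
    PlurisubharmonicOn (fun z => ((ρ z : ℝ) : EReal)) D ∧
    (∀ z ∈ D, ρ z < 0) ∧
    ∀ c : ℝ, c < 0 → ∃ K : Set (Cn n), IsCompact K ∧ K ⊆ D ∧ {z ∈ D | ρ z ≤ c} ⊆ K

/-- Defining data for a bounded strictly hyperconvex domain `D`: a bounded domain `Ω` and
a continuous plurisubharmonic exhaustion `ρ : Ω → (-∞, 1)` with `D = {ρ < 0}` and all
sublevel sets `{ρ < c}`, `c ∈ [0,1]`, connected. -/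
structure StrictHyperconvexData (n : ℕ) (D : Set (Cn n)) where
  Ω : Set (Cn n)
  Ω_open : IsOpen Ω
  Ω_conn : IsConnected Ω
  Ω_bdd : Bornology.IsBounded Ω
  ρ : Cn n → ℝ
  ρ_cont : ContinuousOn ρ Ω
  ρ_psh : PlurisubharmonicOn (fun z => ((ρ z : ℝ) : EReal)) Ω
  ρ_lt_one : ∀ z ∈ Ω, ρ z < 1
  ρ_exhaust : ∀ c : ℝ, c < 1 → ∃ K : Set (Cn n), IsCompact K ∧ K ⊆ Ω ∧ {z ∈ Ω | ρ z ≤ c} ⊆ K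
  D_eq : D = {z ∈ Ω | ρ z < 0}
  lvl_conn : ∀ c : ℝ, 0 ≤ c → c ≤ 1 → IsConnected {z ∈ Ω | ρ z < c}

/-- A pseudoconvex domain: an open nonempty set admitting a continuous plurisubharmonic
exhaustion function. -/
def IsPseudoconvex {n : ℕ} (Ω : Set (Cn n)) : Prop :=
  IsOpen Ω ∧ Ω.Nonempty ∧
  ∃ ρ : Cn n → ℝ, ContinuousOn ρ Ω ∧
    PlurisubharmonicOn (fun z => ((ρ z : ℝ) : EReal)) Ω ∧
    ∀ c : ℝ, ∃ K : Set (Cn n), IsCompact K ∧ K ⊆ Ω ∧ {z ∈ Ω | ρ z ≤ c} ⊆ K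

/-- `g` is (Lebesgue) integrable in some neighborhood of `z₀`. -/
def IntegrableNear {n : ℕ} (g : Cn n → ℝ≥0∞) (z₀ : Cn n) : Prop :=
  ∃ r > (0:ℝ), (∫⁻ w in Metric.ball z₀ r, g w) < ⊤

/-- The density `|f|² e^{-2u}` associated to a vector `f` of holomorphic functions and a
weight `u`. -/
noncomputable def densFn {n k : ℕ} (f : Fin k → Cn n → ℂ) (u : Cn n → EReal) (w : Cn n) :
    ℝ≥0∞ :=
  (∑ j, ((‖f j w‖₊ : ℝ≥0∞)) ^ 2) * expE ((-2 : EReal) * u w)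

/-- `(f, z₀) ∈ 𝓘(u)_{z₀}`: the germ of `f` belongs to the multiplier ideal of `u` at
`z₀`, i.e. `|f|² e^{-2u}` is integrable near `z₀`. -/
def MemIdeal {n : ℕ} (f : Cn n → ℂ) (u : Cn n → EReal) (z₀ : Cn n) : Prop :=
  IntegrableNear (fun w => ((‖f w‖₊ : ℝ≥0∞)) ^ 2 * expE ((-2 : EReal) * u w)) z₀

/-- `(f, z₀) ∉ 𝓘(u + g)_{z₀}`: `|f|² e^{-2u} e^{-2g}` is not integrable near `z₀`. -/
def NotInIdeal {n k : ℕ} (f : Fin k → Cn n → ℂ) (u g : Cn n → EReal) (z₀ : Cn n) : Prop :=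
  ¬ IntegrableNear (fun w => densFn f u w * expE ((-2 : EReal) * g w)) z₀

/-- A priori datum `𝒫 = ({z_i}, {f_{0,i}}, {u_{0,i}})`: distinct points `z_i`, vectors
`f_{0,i}` of holomorphic functions near `z_i`, and plurisubharmonic weights `u_{0,i}`
near `z_i` such that each `|f_{0,i}|² e^{-2u_{0,i}}` is integrable near `z_i`. -/
structure PrioriDatum (n p : ℕ) where
  z : Fin p → Cn n
  z_inj : Function.Injective z
  k : Fin p → ℕ
  f : (i : Fin p) → Fin (k i) → Cn n → ℂ
  u : Fin p → Cn n → EReal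
  rad : Fin p → ℝ
  rad_pos : ∀ i, 0 < rad i
  f_holo : ∀ i j, DifferentiableOn ℂ (f i j) (Metric.ball (z i) (rad i))
  u_psh : ∀ i, PlurisubharmonicOn (u i) (Metric.ball (z i) (rad i))
  u_int : ∀ i, IntegrableNear (densFn (f i) (u i)) (z i)

/-- `Φ` is a (multipoled) global Zhou weight related to the datum `P` on the domain `G`. -/
def IsGlobalZhouWeight {n p : ℕ} (G : Set (Cn n)) (P : PrioriDatum n p)
    (Φ : Cn n → EReal) : Prop :=
  NegPSHOn Φ G ∧
  (∃ N₀ : ℝ, 0 < N₀ ∧ ∀ N : Fin p → ℝ, (∀ i, N₀ ≤ N i) → ∀ i,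
    IntegrableNear (fun w => densFn (P.f i) (P.u i) w *
      ENNReal.ofReal (‖w - P.z i‖ ^ (2 * N i)) * expE ((-2 : EReal) * Φ w)) (P.z i)) ∧
  (∀ i, NotInIdeal (P.f i) (P.u i) Φ (P.z i)) ∧
  (∀ Ψ : Cn n → EReal, NegPSHOn Ψ G → (∀ z ∈ G, Φ z ≤ Ψ z) →
    (∀ i, NotInIdeal (P.f i) (P.u i) Ψ (P.z i)) → ∀ z ∈ G, Ψ z = Φ z)

/-- `φ` is a local Zhou weight related to `|f|² e^{-2u}` near `z₀`. -/
def IsLocalZhouWeight {n : ℕ} (z₀ : Cn n) {k : ℕ} (f : Fin k → Cn n → ℂ)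
    (u : Cn n → EReal) (φ : Cn n → EReal) : Prop :=
  (∃ r > (0:ℝ), PlurisubharmonicOn φ (Metric.ball z₀ r)) ∧
  (∃ N₀ : ℝ, 0 < N₀ ∧ ∀ N : ℝ, N₀ ≤ N →
    IntegrableNear (fun w => densFn f u w *
      ENNReal.ofReal (‖w - z₀‖ ^ (2 * N)) * expE ((-2 : EReal) * φ w)) z₀) ∧
  NotInIdeal f u φ z₀ ∧
  (∀ φ' : Cn n → EReal, (∃ r > (0:ℝ), PlurisubharmonicOn φ' (Metric.ball z₀ r)) →
    GeO1Near φ' φ z₀ → NotInIdeal f u φ' z₀ → EqO1Near φ' φ z₀)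

/-- The upper envelope of all negative plurisubharmonic functions `g` on `D` with
`(f_{0,i}, z_i) ∉ 𝓘(u_{0,i} + g)_{z_i}` and `g ≥ φ_i + O(1)` near every pole `z_i`. -/
noncomputable def zhouSup {n p : ℕ} (D : Set (Cn n)) (P : PrioriDatum n p)
    (φ : Fin p → Cn n → EReal) (x : Cn n) : EReal :=
  sSup {v : EReal | ∃ g : Cn n → EReal,
    (NegPSHOn g D ∧ (∀ i, NotInIdeal (P.f i) (P.u i) g (P.z i)) ∧
      ∀ i, GeO1Near g (φ i) (P.z i)) ∧ v = g x}

/-- The multipoled pluricomplex Green function `G_{D,(z_1,…,z_p)}`. -/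
noncomputable def greenMulti {n p : ℕ} (D : Set (Cn n)) (z : Fin p → Cn n) (x : Cn n) :
    EReal :=
  sSup {v : EReal | ∃ g : Cn n → EReal,
    (NegPSHOn g D ∧ ∀ i, ∃ r > (0:ℝ), ∃ C : ℝ,
      ∀ w ∈ Metric.ball (z i) r, g w ≤ elog ‖w - z i‖ + (C : EReal)) ∧ v = g x}

/-- Extension of a function on `D` by `0` outside `D` (in particular on `∂D`). -/
noncomputable def extZero {n : ℕ} (D : Set (Cn n)) (Φ : Cn n → EReal) (x : Cn n) : EReal :=
  if x ∈ D then Φ x else 0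

/-- Local datum near the origin: a vector `f` of holomorphic functions near `0` and a
plurisubharmonic weight `u` near `0` with `|f|² e^{-2u}` integrable near `0`. -/
structure LocalDatum (n : ℕ) where
  k : ℕ
  f : Fin k → Cn n → ℂ
  u : Cn n → EReal
  rad : ℝ
  rad_pos : 0 < rad
  f_holo : ∀ j, DifferentiableOn ℂ (f j) (Metric.ball 0 rad)
  u_psh : PlurisubharmonicOn u (Metric.ball 0 rad)
  u_int : IntegrableNear (densFn f u) 0

/-- The multipoled global Zhou weight `Φ_{Z,max}^D` attached to translated local data:
the upper envelope of negative plurisubharmonic `g` on `D` with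
`(τ_{z_i} f_{0,i}, z_i) ∉ 𝓘(τ_{z_i} u_{0,i} + g)_{z_i}` and
`g ≥ τ_{z_i} φ_i + O(1)` near each `z_i`. -/
noncomputable def zhouSupTrans {n p : ℕ} (D : Set (Cn n)) (L : Fin p → LocalDatum n)
    (φ : Fin p → Cn n → EReal) (z : Fin p → Cn n) (x : Cn n) : EReal :=
  sSup {v : EReal | ∃ g : Cn n → EReal,
    (NegPSHOn g D ∧
      (∀ i, NotInIdeal (fun j w => (L i).f j (w - z i)) (fun w => (L i).u (w - z i)) g
        (z i)) ∧
      ∀ i, GeO1Near g (fun w => φ i (w - z i)) (z i)) ∧ v = g x}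

/-- The single-pole datum extracted from a multipoled datum. -/
def PrioriDatum.single {n p : ℕ} (P : PrioriDatum n p) (i : Fin p) : PrioriDatum n 1 where
  z := fun _ => P.z i
  z_inj := fun a b _ => Subsingleton.elim a b
  k := fun _ => P.k i
  f := fun _ => P.f i
  u := fun _ => P.u i
  rad := fun _ => P.rad i
  rad_pos := fun _ => P.rad_pos i
  f_holo := fun _ j => P.f_holo i j
  u_psh := fun _ => P.u_psh i
  u_int := fun _ => P.u_int i

/-- `f ∈ ℰ_m(D)`: holomorphic on `D`, bounded by `1`, and belonging to the multiplier
ideal `𝓘(mΦ)` at every pole. -/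
def memE {n p : ℕ} (D : Set (Cn n)) (P : PrioriDatum n p) (Φ : Cn n → EReal) (m : ℕ)
    (f : Cn n → ℂ) : Prop :=
  DifferentiableOn ℂ f D ∧ (∀ z ∈ D, ‖f z‖ ≤ 1) ∧
    ∀ i, MemIdeal f (fun w => ((m : ℝ) : EReal) * Φ w) (P.z i)

/-- `f ∈ 𝒜²_m(D)`: holomorphic on `D`, with `∫_D |f|² ≤ 1`, and belonging to the
multiplier ideal `𝓘(mΦ)` at every pole. -/
def memA {n p : ℕ} (D : Set (Cn n)) (P : PrioriDatum n p) (Φ : Cn n → EReal) (m : ℕ)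
    (f : Cn n → ℂ) : Prop :=
  DifferentiableOn ℂ f D ∧ (∫⁻ w in D, ((‖f w‖₊ : ℝ≥0∞)) ^ 2) ≤ 1 ∧
    ∀ i, MemIdeal f (fun w => ((m : ℝ) : EReal) * Φ w) (P.z i)

/-- `φ_m(x) = sup{(1/m) log|f(x)| : f ∈ ℰ_m(D)}`. -/
noncomputable def phiSupE {n p : ℕ} (D : Set (Cn n)) (P : PrioriDatum n p)
    (Φ : Cn n → EReal) (m : ℕ) (x : Cn n) : EReal :=
  sSup {v : EReal | ∃ f : Cn n → ℂ, memE D P Φ m f ∧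
    v = ((1 / (m : ℝ) : ℝ) : EReal) * elog ‖f x‖}

/-- `ϖ_m(x) = sup{(1/m) log|f(x)| : f ∈ 𝒜²_m(D)}`. -/
noncomputable def phiSupA {n p : ℕ} (D : Set (Cn n)) (P : PrioriDatum n p)
    (Φ : Cn n → EReal) (m : ℕ) (x : Cn n) : EReal :=
  sSup {v : EReal | ∃ f : Cn n → ℂ, memA D P Φ m f ∧
    v = ((1 / (m : ℝ) : ℝ) : EReal) * elog ‖f x‖}

/-- `Φ_{D,z_i}`: the upper envelope of all negative plurisubharmonic `g` on `D` with
`(f_{0,i}, z_i) ∉ 𝓘(u_{0,i} + g)_{z_i}` and `g ≥ Φ` on `D`. -/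
noncomputable def zhouSupGe {n p : ℕ} (D : Set (Cn n)) (P : PrioriDatum n p) (i : Fin p)
    (Φ : Cn n → EReal) (x : Cn n) : EReal :=
  sSup {v : EReal | ∃ g : Cn n → EReal,
    (NegPSHOn g D ∧ NotInIdeal (P.f i) (P.u i) g (P.z i) ∧ ∀ z ∈ D, Φ z ≤ g z) ∧
    v = g x}

end

/-!
For `0 < c < σ_Z(ψ, Φ)` the bound `ψ ≤ cΦ + O(1)` near each pole makes `Ψ = max(Φ, ψ / c)` a
negative plurisubharmonic function with `Ψ ≤ Φ + O(1)` near the poles, so that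
`|f_{0,i}|² e^{-2u_{0,i} - 2Ψ}` is still not integrable near any `z_i`. Since `Ψ ≥ Φ`, the
maximality of the global Zhou weight forces `Ψ = Φ`, i.e. `ψ ≤ cΦ` on `D`; then let `c ↑ σ_Z`.
-/

namespace EReal

lemma inv_coe_mul_coe_mul {a : ℝ} (ha : a ≠ 0) (x : EReal) :
    ((a⁻¹ : ℝ) : EReal) * ((a : EReal) * x) = x := by
  rw [← mul_assoc, ← coe_mul, inv_mul_cancel₀ ha, coe_one, one_mul]

lemma strictMono_coe_mul {a : ℝ} (ha : 0 < a) : StrictMono fun x : EReal => (a : EReal) * x :=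
  (monotone_mul_left_of_nonneg (EReal.coe_nonneg.2 ha.le)).strictMono_of_injective fun _ _ hxy => by
    simpa only [inv_coe_mul_coe_mul ha.ne'] using congrArg (((a⁻¹ : ℝ) : EReal) * ·) hxy

lemma coe_mul_le_iff_le_inv_mul {a : ℝ} (ha : 0 < a) {x y : EReal} :
    (a : EReal) * x ≤ y ↔ x ≤ ((a⁻¹ : ℝ) : EReal) * y := by
  have h := (strictMono_coe_mul ha).le_iff_le (a := x) (b := ((a⁻¹ : ℝ) : EReal) * y)
  rwa [← mul_assoc, ← coe_mul, mul_inv_cancel₀ ha.ne', coe_one, one_mul] at h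

lemma continuous_coe_mul {a : ℝ} (ha : a ≠ 0) : Continuous fun x : EReal => (a : EReal) * x :=
  continuous_iff_continuousAt.2 fun _ =>
    (continuousAt_mul (.inl (coe_ne_zero.2 ha)) (.inl (coe_ne_zero.2 ha)) (.inl (coe_ne_bot a))
      (.inl (coe_ne_top a))).comp (continuous_const.prodMk continuous_id).continuousAt

lemma le_coe_mul_of_forall_lt {x y : EReal} {c : ℝ} (hc : 0 < c)
    (h : ∀ c' : ℝ, 0 < c' → c' < c → y ≤ (c' : EReal) * x) : y ≤ (c : EReal) * x := by
  induction x using EReal.rec with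
  | bot =>
    simpa [coe_mul_bot_of_pos hc, coe_mul_bot_of_pos (half_pos hc)] using
      h (c / 2) (half_pos hc) (half_lt_self hc)
  | coe t =>
    have hlim : Tendsto (fun c' : ℝ => (c' : EReal) * t) (𝓝[<] c) (𝓝 ((c : EReal) * t)) := by
      simp_rw [← coe_mul]
      exact ((continuous_coe_real_ereal.comp (continuous_mul_const t)).tendsto c).mono_left
        nhdsWithin_le_nhds
    refine ge_of_tendsto hlim ?_
    filter_upwards [Ioo_mem_nhdsLT (half_lt_self hc)] with c' hc'
    exact h c' ((half_pos hc).trans hc'.1) hc'.2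
  | top => simp [coe_mul_top_of_pos hc]

lemma neg_two_eq_coe : (-2 : EReal) = ((-2 : ℝ) : EReal) := rfl

end EReal

lemma expE_mono : Monotone expE := by
  intro x y h
  rcases eq_or_ne y ⊤ with rfl | hy
  · simp [expE]
  rcases eq_or_ne x ⊥ with rfl | hx
  · simp [expE]
  have hx' : x ≠ ⊤ := ne_top_of_le_ne_top hy h
  have hy' : y ≠ ⊥ := ne_bot_of_le_ne_bot hx h
  rw [expE, expE, if_neg hx', if_neg hx, if_neg hy, if_neg hy']
  exact ENNReal.ofReal_le_ofReal (Real.exp_le_exp.2 (EReal.toReal_le_toReal h hx hy))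

lemma expE_coe (t : ℝ) : expE t = ENNReal.ofReal (Real.exp t) := by
  simp [expE]

lemma expE_neg_two_mul_add_coe (x : EReal) (C : ℝ) :
    expE (-2 * (x + C)) = expE (-2 * x) * ENNReal.ofReal (Real.exp (-2 * C)) := by
  induction x using EReal.rec with
  | bot =>
    rw [EReal.bot_add, EReal.neg_two_eq_coe, EReal.coe_mul_bot_of_neg (by norm_num), expE,
      if_pos rfl, ENNReal.top_mul (ENNReal.ofReal_pos.2 (Real.exp_pos _)).ne']
  | coe t =>
    rw [EReal.neg_two_eq_coe, ← EReal.coe_add, ← EReal.coe_mul, ← EReal.coe_mul, expE_coe,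
      expE_coe, ← ENNReal.ofReal_mul (Real.exp_pos _).le, ← Real.exp_add, mul_add]
  | top =>
    rw [EReal.top_add_coe, EReal.neg_two_eq_coe, EReal.coe_mul_top_of_neg (by norm_num), expE,
      if_neg, if_pos rfl, zero_mul]
    exact bot_ne_top

section PSH

variable {F : Type*} [NormedAddCommGroup F] [NormedSpace ℂ F] {u v : F → EReal} {D : Set F}

lemma PlurisubharmonicOn.sup (hu : PlurisubharmonicOn u D) (hv : PlurisubharmonicOn v D) :
    PlurisubharmonicOn (fun z => u z ⊔ v z) D := by
  refine ⟨hu.1.sup hv.1, fun z hz => sup_lt_iff.2 ⟨hu.2.1 z hz, hv.2.1 z hz⟩, ?_⟩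
  intro a b r hr hball h hh hbd l hl
  exact sup_le
    (hu.2.2 a b r hr hball h hh (fun l' hl' => le_sup_left.trans (hbd l' hl')) l hl)
    (hv.2.2 a b r hr hball h hh (fun l' hl' => le_sup_right.trans (hbd l' hl')) l hl)

lemma PlurisubharmonicOn.const_mul (hu : PlurisubharmonicOn u D) {a : ℝ} (ha : 0 < a) :
    PlurisubharmonicOn (fun z => (a : EReal) * u z) D := by
  refine ⟨(EReal.continuous_coe_mul ha.ne').comp_upperSemicontinuousOn hu.1
    (EReal.strictMono_coe_mul ha).monotone, fun z hz => ?_, ?_⟩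
  · simpa [EReal.coe_mul_top_of_pos ha] using (EReal.strictMono_coe_mul ha) (hu.2.1 z hz)
  intro p q r hr hball h hh hbd l hl
  have hbd' : ∀ l', ‖l'‖ = r → u (p + l' • q) ≤ ((((a⁻¹ : ℝ) : ℂ) * h l').re : EReal) := by
    intro l' hl'
    simpa [Complex.re_ofReal_mul] using (EReal.coe_mul_le_iff_le_inv_mul ha).1 (hbd l' hl')
  have hin := hu.2.2 p q r hr hball _ ((differentiableOn_const _).mul hh) hbd' l hl
  rw [EReal.coe_mul_le_iff_le_inv_mul ha]
  simpa [Complex.re_ofReal_mul] using hin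

end PSH

section GeO1Near

variable {F : Type*} [NormedAddCommGroup F] {f g g₁ g₂ : F → EReal} {z₀ : F}

lemma geO1Near_refl (f : F → EReal) (z₀ : F) : GeO1Near f f z₀ :=
  ⟨1, one_pos, 0, fun w _ => by rw [EReal.coe_zero, add_zero]⟩

lemma GeO1Near.sup (h₁ : GeO1Near f g₁ z₀) (h₂ : GeO1Near f g₂ z₀) :
    GeO1Near f (fun w => g₁ w ⊔ g₂ w) z₀ := by
  obtain ⟨r₁, hr₁, C₁, h₁⟩ := h₁
  obtain ⟨r₂, hr₂, C₂, h₂⟩ := h₂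
  refine ⟨min r₁ r₂, lt_min hr₁ hr₂, max C₁ C₂, fun w hw => sup_le ?_ ?_⟩
  · exact (h₁ w (ball_subset_ball (min_le_left _ _) hw)).trans (by gcongr; exact le_max_left _ _)
  · exact (h₂ w (ball_subset_ball (min_le_right _ _) hw)).trans (by gcongr; exact le_max_right _ _)

lemma GeO1Near.const_mul (h : GeO1Near f g z₀) {a : ℝ} (ha : 0 ≤ a) :
    GeO1Near (fun w => (a : EReal) * f w) (fun w => (a : EReal) * g w) z₀ := by
  obtain ⟨r, hr, C, h⟩ := h
  refine ⟨r, hr, a * C, fun w hw => ?_⟩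
  rw [EReal.coe_mul, ← EReal.left_distrib_of_nonneg_of_ne_top (EReal.coe_nonneg.2 ha)
    (EReal.coe_ne_top a)]
  exact mul_le_mul_of_nonneg_left (h w hw) (EReal.coe_nonneg.2 ha)

lemma relType_nonneg {ψ φ : F → EReal} : 0 ≤ relType ψ φ z₀ :=
  Real.sSup_nonneg fun _ hc => hc.1

lemma geO1Near_coe_mul_of_lt_relType {ψ φ : F → EReal} {c : ℝ} (hφ : ∀ᶠ w in 𝓝 z₀, φ w ≤ 0)
    (hc : 0 ≤ c) (hlt : c < relType ψ φ z₀) : GeO1Near (fun w => (c : EReal) * φ w) ψ z₀ := by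
  set S := {b : ℝ | 0 ≤ b ∧ GeO1Near (fun w => (b : EReal) * φ w) ψ z₀}
  have hS : S.Nonempty := by
    refine S.eq_empty_or_nonempty.resolve_left fun hS => ?_
    rw [show relType ψ φ z₀ = sSup S from rfl, hS, Real.sSup_empty] at hlt
    exact hlt.not_ge hc
  obtain ⟨c', ⟨-, r, hr, C, hψ⟩, hcc'⟩ := exists_lt_of_lt_csSup hS hlt
  obtain ⟨ε, hε, hφε⟩ := Metric.eventually_nhds_iff_ball.1 hφ
  refine ⟨min r ε, lt_min hr hε, C, fun w hw => ?_⟩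
  refine (hψ w (ball_subset_ball (min_le_left _ _) hw)).trans ?_
  gcongr
  exact EReal.mul_le_mul_of_nonpos_right (EReal.coe_le_coe_iff.2 hcc'.le)
    (hφε w (ball_subset_ball (min_le_right _ _) hw))

end GeO1Near

lemma NotInIdeal.of_geO1Near {n k : ℕ} {f : Fin k → Cn n → ℂ} {u g g' : Cn n → EReal}
    {z₀ : Cn n} (hg : NotInIdeal f u g z₀) (h : GeO1Near g g' z₀) : NotInIdeal f u g' z₀ := by
  rintro ⟨r', hr', hfin⟩
  obtain ⟨r, hr, C, hle⟩ := h
  set κ := ENNReal.ofReal (Real.exp (-2 * C))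
  have hκ : κ ≠ 0 := (ENNReal.ofReal_pos.2 (Real.exp_pos _)).ne'
  have hpt : ∀ w ∈ ball z₀ (min r r'),
      densFn f u w * expE (-2 * g w) * κ ≤ densFn f u w * expE (-2 * g' w) := by
    intro w hw
    rw [mul_assoc, ← expE_neg_two_mul_add_coe]
    gcongr
    refine expE_mono ?_
    rw [EReal.mul_comm, EReal.mul_comm (-2)]
    exact EReal.mul_le_mul_of_nonpos_right (hle w (ball_subset_ball (min_le_left _ _) hw))
      (by norm_num)
  refine hg ⟨min r r', lt_min hr hr', ENNReal.lt_top_of_mul_ne_top_left ?_ hκ⟩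
  rw [← lintegral_mul_const' _ _ ENNReal.ofReal_ne_top]
  refine (lt_of_le_of_lt ?_ hfin).ne
  calc ∫⁻ w in ball z₀ (min r r'), densFn f u w * expE (-2 * g w) * κ
      ≤ ∫⁻ w in ball z₀ (min r r'), densFn f u w * expE (-2 * g' w) :=
        setLIntegral_mono' measurableSet_ball hpt
    _ ≤ ∫⁻ w in ball z₀ r', densFn f u w * expE (-2 * g' w) :=
        lintegral_mono_set (ball_subset_ball (min_le_right _ _))

theorem IsGlobalZhouWeight.le_coe_mul_of_geO1Near {n p : ℕ} {D : Set (Cn n)}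
    {P : PrioriDatum n p} {Φ ψ : Cn n → EReal} (hΦ : IsGlobalZhouWeight D P Φ)
    (hψ : NegPSHOn ψ D) {c : ℝ} (hc : 0 < c)
    (hpoles : ∀ i, GeO1Near (fun w => (c : EReal) * Φ w) ψ (P.z i)) :
    ∀ z ∈ D, ψ z ≤ (c : EReal) * Φ z := by
  obtain ⟨hΦ_neg, -, hΦ_poles, hΦ_max⟩ := hΦ
  set Ψ := fun w => Φ w ⊔ ((c⁻¹ : ℝ) : EReal) * ψ w
  have hΨ : NegPSHOn Ψ D := ⟨hΦ_neg.1.sup (hψ.1.const_mul (inv_pos.2 hc)), fun z hz =>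
    sup_le (hΦ_neg.2 z hz) (mul_nonpos_of_nonneg_of_nonpos (EReal.coe_nonneg.2 (inv_pos.2 hc).le)
      (hψ.2 z hz))⟩
  have hΨ_poles : ∀ i, NotInIdeal (P.f i) (P.u i) Ψ (P.z i) := by
    intro i
    have hψ_i := (hpoles i).const_mul (inv_pos.2 hc).le
    simp only [EReal.inv_coe_mul_coe_mul hc.ne'] at hψ_i
    exact (hΦ_poles i).of_geO1Near ((geO1Near_refl Φ _).sup hψ_i)
  have hΨ_eq := hΦ_max Ψ hΨ (fun _ _ => le_sup_left) hΨ_poles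
  intro z hz
  have h : ((c⁻¹ : ℝ) : EReal) * ψ z ≤ Φ z := hΨ_eq z hz ▸ le_sup_right
  rwa [EReal.coe_mul_le_iff_le_inv_mul (inv_pos.2 hc), inv_inv] at h

theorem statement4_general {n p : ℕ} (D : Set (Cn n)) (hD : IsHyperconvex D)
    (P : PrioriDatum n p) (hzD : ∀ i, P.z i ∈ D)
    (Φ : Cn n → EReal) (hΦ : IsGlobalZhouWeight D P Φ)
    (ψ : Cn n → EReal) (hψ : NegPSHOn ψ D) :
    ∀ z ∈ D, ψ z ≤ ((⨅ i, relType ψ Φ (P.z i) : ℝ) : EReal) * Φ z := by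
  intro z hz
  set c := ⨅ i, relType ψ Φ (P.z i)
  rcases (Real.iInf_nonneg fun _ => relType_nonneg : 0 ≤ c).eq_or_lt with hc | hc
  · rw [show c = 0 from hc.symm, EReal.coe_zero, zero_mul]
    exact hψ.2 z hz
  refine EReal.le_coe_mul_of_forall_lt hc fun c' hc' hc'c =>
    hΦ.le_coe_mul_of_geO1Near hψ hc' (fun i => ?_) z hz
  have hΦ_nonpos : ∀ᶠ w in 𝓝 (P.z i), Φ w ≤ 0 :=
    eventually_of_mem (hD.1.mem_nhds (hzD i)) hΦ.1.2
  exact geO1Near_coe_mul_of_lt_relType hΦ_nonpos hc'.le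
    (hc'c.trans_le (ciInf_le (finite_range _).bddBelow i))

/-- Proposition 1.7: for any `ψ ∈ PSH⁻(D)`, `ψ ≤ σ_Z(ψ, Φ) · Φ` on `D`, where
`σ_Z(ψ, Φ) = min_i σ_{z_i}(ψ, Φ)`. -/
theorem statement4 {n p : ℕ} (hp : 0 < p) (D : Set (Cn n)) (hD : IsHyperconvex D)
    (P : PrioriDatum n p) (hzD : ∀ i, P.z i ∈ D)
    (Φ : Cn n → EReal) (hΦ : IsGlobalZhouWeight D P Φ)
    (ψ : Cn n → EReal) (hψ : NegPSHOn ψ D) :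
    ∀ z ∈ D, ψ z ≤ ((⨅ i, relType ψ Φ (P.z i) : ℝ) : EReal) * Φ z :=
  statement4_general D hD P hzD Φ hΦ ψ hψ
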